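/- (Li–Yorke chaos) Let f : ℝ × ℝ → ℝ be continuous and 1-periodic in the time variable, and suppose the equation x' = f(t,x) admits a solution x with x(t+2) = x(t) for all t ∈ ℝ and x(t₁+1) ≠ x(t₁) for some t₁ ∈ ℝ. Then there exists a compact subset W of C(ℝ,ℝ), consisting of solutions of x' = f(t,x) and invariant under the time-one shift ψ₁, and an uncountable set S ⊆ W which is scrambled for ψ = ψ₁|_W with respect to the metric ρ: for all w, v ∈ S with w ≠ v, liminf_{n→∞} ρ(ψⁿ(w), ψⁿ(v)) = 0 and limsup_{n→∞} ρ(ψⁿ(w), ψⁿ(v)) > 0. -/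

import Mathlib

/-- `x` is a (classical) solution of the ODE `x' = f(t,x)` on the whole real line. -/
def IsSolution (f : ℝ × ℝ → ℝ) (x : ℝ → ℝ) : Prop :=
  ∀ t : ℝ, HasDerivAt x (f (t, x t)) t

/-- The time-one shift `ψ₁` on `C(ℝ, ℝ)`: `shiftOne w = w (· + 1)`. -/
def shiftOne (w : C(ℝ, ℝ)) : C(ℝ, ℝ) :=
  w.comp ⟨fun t => t + 1, by continuity⟩

/-- `ϑ_m(f,g) = max {|f t - g t| : t ∈ [-m, m]}`. -/
noncomputable def theta (m : ℕ) (f g : C(ℝ, ℝ)) : ℝ :=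
  sSup ((fun t => |f t - g t|) '' Set.Icc (-(m : ℝ)) (m : ℝ))

/-- The metric `ρ(f,g) = Σ_{m=1}^∞ 2^{-m} ϑ_m(f,g)/(1 + ϑ_m(f,g))` of uniform
convergence on compact sets. -/
noncomputable def rho (f g : C(ℝ, ℝ)) : ℝ :=
  ∑' m : ℕ, (theta (m + 1) f g / (1 + theta (m + 1) f g)) / 2 ^ (m + 1)

/-!
Since `x` has period 2 and `f` has period 1 in time, `y = x (· + 1)` is again a solution and
`y - x` is antiperiodic with antiperiod 1; so it vanishes on a whole grid `t₀ + ℤ`, and on each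
cell `[t₀ + k, t₀ + k + 1]` one may follow either `x` or `y` and still get a solution. A choice
`σ : ℤ → Bool` of branches yields a solution depending continuously on `σ`, and since
`y (· + 1) = x` the time-one shift acts on choices as `σ ↦ (k ↦ !σ (k + 1))`; `W` is the image of
the compact space `ℤ → Bool`. After `n` shifts, two choices are `ρ`-close if they agree on a long
window around `n`, and `ρ`-apart by a fixed amount if they differ at `n`, because `y - x` is
nonzero at some point of the cell `[t₀, t₀ + 1)`. So it suffices to embed `ℕ → Bool` into
`ℤ → Bool` so that any two distinct images agree on arbitrarily long windows and differ at
infinitely many places.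
-/

open Set Filter Topology

lemma Filter.liminf_eq_zero_of_frequently_le {ι : Type*} {l : Filter ι} {a : ι → ℝ}
    (h0 : ∀ i, 0 ≤ a i) (h : ∀ ε > 0, ∃ᶠ i in l, a i ≤ ε) : l.liminf a = 0 := by
  refine le_antisymm (le_of_forall_pos_le_add fun ε hε => ?_)
    (le_liminf_of_le (.of_frequently_le (h 1 one_pos)) (.of_forall h0))
  rw [zero_add]
  exact liminf_le_of_frequently_le (h ε hε) (isBoundedUnder_of ⟨0, h0⟩)

section Rho

variable (m : ℕ) (w v : C(ℝ, ℝ))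

lemma bddAbove_abs_sub_image_Icc :
    BddAbove ((fun t => |w t - v t|) '' Icc (-(m : ℝ)) m) :=
  (isCompact_Icc.image (w.continuous.sub v.continuous).abs).bddAbove

lemma abs_sub_le_theta {t : ℝ} (ht : t ∈ Icc (-(m : ℝ)) m) : |w t - v t| ≤ theta m w v :=
  le_csSup (bddAbove_abs_sub_image_Icc m w v) ⟨t, ht, rfl⟩

lemma theta_nonneg : 0 ≤ theta m w v :=
  (abs_nonneg _).trans (abs_sub_le_theta m w v (t := 0) (by simp))

lemma theta_le {C : ℝ} (h : ∀ t ∈ Icc (-(m : ℝ)) m, |w t - v t| ≤ C) : theta m w v ≤ C :=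
  csSup_le ((nonempty_Icc.2 (neg_le_self m.cast_nonneg)).image _) (forall_mem_image.2 h)

lemma rho_term_nonneg : 0 ≤ theta (m + 1) w v / (1 + theta (m + 1) w v) / 2 ^ (m + 1) := by
  have := theta_nonneg (m + 1) w v
  positivity

lemma rho_term_le : theta (m + 1) w v / (1 + theta (m + 1) w v) / 2 ^ (m + 1) ≤ 1 / 2 / 2 ^ m := by
  have := theta_nonneg (m + 1) w v
  have h : theta (m + 1) w v / (1 + theta (m + 1) w v) ≤ 1 := by
    rw [div_le_one (by positivity)]
    linarith
  calc theta (m + 1) w v / (1 + theta (m + 1) w v) / 2 ^ (m + 1) ≤ 1 / 2 ^ (m + 1) := by gcongr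
    _ = 1 / 2 / 2 ^ m := by ring

lemma summable_rho_term :
    Summable fun m => theta (m + 1) w v / (1 + theta (m + 1) w v) / 2 ^ (m + 1) :=
  .of_nonneg_of_le (rho_term_nonneg · w v) (rho_term_le · w v)
    (summable_geometric_two' 1)

lemma rho_nonneg : 0 ≤ rho w v :=
  tsum_nonneg (rho_term_nonneg · w v)

lemma rho_le_one : rho w v ≤ 1 :=
  ((summable_rho_term w v).tsum_le_tsum (rho_term_le · w v) (summable_geometric_two' 1)).trans_eq
    (tsum_geometric_two' 1)

lemma rho_le_of_eqOn (M : ℕ) (h : EqOn w v (Icc (-(M : ℝ)) M)) : rho w v ≤ (1 / 2) ^ M := by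
  have hhead : ∀ m ∈ Finset.range M,
      theta (m + 1) w v / (1 + theta (m + 1) w v) / 2 ^ (m + 1) = 0 := by
    intro m hm
    have hmM : ((m + 1 : ℕ) : ℝ) ≤ M := by exact_mod_cast Finset.mem_range.1 hm
    have : theta (m + 1) w v = 0 := le_antisymm (theta_le (m + 1) w v fun t ht => by
      rw [h (Icc_subset_Icc (neg_le_neg hmM) hmM ht), sub_self, abs_zero]) (theta_nonneg _ w v)
    simp [this]
  rw [rho, ← (summable_rho_term w v).sum_add_tsum_nat_add M, Finset.sum_eq_zero hhead, zero_add]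
  calc _ ≤ ∑' i : ℕ, (1 / 2) ^ M / 2 / 2 ^ i :=
        ((summable_nat_add_iff M).2 (summable_rho_term w v)).tsum_le_tsum
          (fun i => (rho_term_le (i + M) w v).trans_eq (by rw [pow_add, one_div_pow]; ring))
          (summable_geometric_two' _)
    _ = (1 / 2) ^ M := tsum_geometric_two' _

lemma abs_sub_div_le_rho {t : ℝ} (ht : t ∈ Icc (-((m + 1 : ℕ) : ℝ)) (m + 1 : ℕ)) :
    |w t - v t| / (1 + |w t - v t|) / 2 ^ (m + 1) ≤ rho w v := by
  have hθ := abs_sub_le_theta (m + 1) w v ht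
  have : |w t - v t| / (1 + |w t - v t|) ≤ theta (m + 1) w v / (1 + theta (m + 1) w v) := by
    rw [div_le_div_iff₀ (by positivity) (by linarith [abs_nonneg (w t - v t)])]
    linarith
  exact (div_le_div_of_nonneg_right this (by positivity)).trans
    ((summable_rho_term w v).le_tsum m fun j _ => rho_term_nonneg j w v)

end Rho

def flipShift (σ : ℤ → Bool) : ℤ → Bool := fun k => !σ (k + 1)

lemma flipShift_surjective : Function.Surjective flipShift :=
  fun τ => ⟨fun k => !τ (k - 1), funext fun k => by simp [flipShift]⟩

lemma flipShift_iterate_apply_eq_iff (n : ℕ) (σ τ : ℤ → Bool) (k : ℤ) :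
    flipShift^[n] σ k = flipShift^[n] τ k ↔ σ (k + n) = τ (k + n) := by
  induction n generalizing σ τ with
  | zero => simp
  | succ n ih =>
    rw [Function.iterate_succ_apply, Function.iterate_succ_apply, ih]
    simp [flipShift, add_assoc]

/-- The block `[j², (j + 1)²)` is filled with zeros when `j` is even and with the bit `u i` when
`j = 2 * Nat.pair i N + 1`; so each bit of `u` recurs in every tail, and so do arbitrarily long
zero blocks. -/
def blockCode (u : ℕ → Bool) (k : ℤ) : Bool :=
  if Nat.sqrt k.toNat % 2 = 1 then u (Nat.unpair (Nat.sqrt k.toNat / 2)).1 else false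

lemma frequently_blockCode_eq_apply (i : ℕ) :
    ∃ᶠ n : ℕ in atTop, ∀ u, blockCode u n = u i := by
  refine frequently_atTop.2 fun N => ⟨(2 * Nat.pair i N + 1) ^ 2, ?_, fun u => ?_⟩
  · nlinarith [Nat.right_le_pair i N]
  · have hodd : (2 * Nat.pair i N + 1) % 2 = 1 := by omega
    have hhalf : (2 * Nat.pair i N + 1) / 2 = Nat.pair i N := by omega
    simp only [blockCode, Int.toNat_natCast, Nat.sqrt_eq', hodd, hhalf, if_true, Nat.unpair_pair]

lemma frequently_blockCode_eq_false (L : ℕ) :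
    ∃ᶠ n : ℕ in atTop, ∀ u, ∀ k : ℤ, |k| ≤ L → blockCode u (k + n) = false := by
  refine frequently_atTop.2 fun N => ⟨2 * (L + N) * (2 * (L + N)) + 2 * (L + N), by nlinarith,
    fun u k hk => ?_⟩
  set j := 2 * (L + N)
  obtain ⟨hk₁, hk₂⟩ := abs_le.1 hk
  have hsqrt : Nat.sqrt (k + (j * j + j : ℕ)).toNat = j := by
    have : (k + (j * j + j : ℕ)).toNat = j * j + (k + j).toNat := by omega
    rw [this, Nat.sqrt_add_eq]
    omega
  have heven : j % 2 = 0 := Nat.mul_mod_right 2 _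
  rw [blockCode, hsqrt, if_neg (by omega)]

lemma ContinuousAt.ite_of_eq {X Y : Type*} [TopologicalSpace X] [TopologicalSpace Y]
    {p : X → Prop} [DecidablePred p] {g h : X → Y} {a : X} (hg : ContinuousAt g a)
    (hh : ContinuousAt h a) (he : g a = h a) :
    ContinuousAt (fun y => if p y then g y else h y) a := by
  have hp : ContinuousWithinAt (fun y => if p y then g y else h y) {y | p y} a :=
    hg.continuousWithinAt.congr (fun y hy => if_pos hy) (by split_ifs <;> simp [he])
  have hnp : ContinuousWithinAt (fun y => if p y then g y else h y) {y | p y}ᶜ a :=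
    hh.continuousWithinAt.congr (fun y hy => if_neg hy) (by split_ifs <;> simp [he])
  simpa [continuousWithinAt_univ] using hp.union hnp

lemma HasDerivAt.ite_of_eq {𝕜 F : Type*} [NontriviallyNormedField 𝕜] [NormedAddCommGroup F]
    [NormedSpace 𝕜 F] {p : 𝕜 → Prop} [DecidablePred p] {g h : 𝕜 → F} {g' : F} {a : 𝕜}
    (hg : HasDerivAt g g' a) (hh : HasDerivAt h g' a) (he : g a = h a) :
    HasDerivAt (fun y => if p y then g y else h y) g' a := by
  have hp : HasDerivWithinAt (fun y => if p y then g y else h y) g' {y | p y} a :=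
    hg.hasDerivWithinAt.congr (fun y hy => if_pos hy) (by split_ifs <;> simp [he])
  have hnp : HasDerivWithinAt (fun y => if p y then g y else h y) g' {y | p y}ᶜ a :=
    hh.hasDerivWithinAt.congr (fun y hy => if_neg hy) (by split_ifs <;> simp [he])
  simpa using hp.union hnp

lemma IsSolution.continuous {f : ℝ × ℝ → ℝ} {x : ℝ → ℝ} (hx : IsSolution f x) : Continuous x :=
  continuous_iff_continuousAt.2 fun t => (hx t).continuousAt

lemma IsSolution.comp_add_one {f : ℝ × ℝ → ℝ} (hper : ∀ t x : ℝ, f (t + 1, x) = f (t, x))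
    {x : ℝ → ℝ} (hx : IsSolution f x) : IsSolution f fun t => x (t + 1) :=
  fun t => by simpa [hper] using (hx (t + 1)).comp_add_const t 1

section Glue

variable {x : ℝ → ℝ} {t₀ : ℝ}

noncomputable def glue (x : ℝ → ℝ) (t₀ : ℝ) (σ : ℤ → Bool) (t : ℝ) : ℝ :=
  if σ ⌊t - t₀⌋ then x (t + 1) else x t

lemma glue_add_one (hx2 : Function.Periodic x 2) (σ : ℤ → Bool) (t : ℝ) :
    glue x t₀ σ (t + 1) = glue x t₀ (flipShift σ) t := by
  have hfloor : ⌊t + 1 - t₀⌋ = ⌊t - t₀⌋ + 1 := by rw [← Int.floor_add_one]; ring_nf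
  have hx2' : x (t + 1 + 1) = x t := by rw [add_assoc, one_add_one_eq_two, hx2]
  rcases hσ : σ (⌊t - t₀⌋ + 1) <;> simp [glue, flipShift, hfloor, hx2', hσ]

lemma eventually_apply_floor_sub_eq {σ : ℤ → Bool} {t : ℝ} (ht : ¬∃ k : ℤ, t = t₀ + k) :
    ∀ᶠ p : (ℤ → Bool) × ℝ in 𝓝 (σ, t), p.1 ⌊p.2 - t₀⌋ = σ ⌊t - t₀⌋ := by
  set k := ⌊t - t₀⌋
  have hlt : t₀ + k < t := by
    have := Int.floor_le (t - t₀)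
    exact lt_of_le_of_ne (by linarith) fun h => ht ⟨k, h.symm⟩
  have hfloor : ∀ᶠ s in 𝓝 t, ⌊s - t₀⌋ = k := by
    have hgt : t < t₀ + k + 1 := by linarith [Int.lt_floor_add_one (t - t₀)]
    filter_upwards [Ioo_mem_nhds hlt hgt] with s hs
    exact Int.floor_eq_iff.2 ⟨by linarith [hs.1], by linarith [hs.2]⟩
  have hσ : ∀ᶠ τ : ℤ → Bool in 𝓝 σ, τ k = σ k :=
    (continuous_apply k).continuousAt.preimage_mem_nhds ((isOpen_discrete {σ k}).mem_nhds rfl)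
  filter_upwards [continuous_fst.continuousAt.eventually hσ,
    continuous_snd.continuousAt.eventually hfloor] with p hp₁ hp₂
  rw [hp₂, hp₁]

variable (hz : ∀ k : ℤ, x (t₀ + k + 1) = x (t₀ + k))
include hz

lemma continuous_glue (hx : Continuous x) :
    Continuous fun p : (ℤ → Bool) × ℝ => glue x t₀ p.1 p.2 := by
  refine continuous_iff_continuousAt.2 fun ⟨σ, t⟩ => ?_
  by_cases ht : ∃ k : ℤ, t = t₀ + k
  · obtain ⟨k, rfl⟩ := ht
    exact ContinuousAt.ite_of_eq (by fun_prop) (by fun_prop) (hz k)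
  · have hbranch : Continuous fun p : (ℤ → Bool) × ℝ =>
        if σ ⌊t - t₀⌋ then x (p.2 + 1) else x p.2 := by
      split <;> fun_prop
    exact hbranch.continuousAt.congr
      ((eventually_apply_floor_sub_eq ht).mono fun p hp => by simp only [glue, hp])

lemma isSolution_glue {f : ℝ × ℝ → ℝ} (hx : IsSolution f x) (hy : IsSolution f fun t => x (t + 1))
    (σ : ℤ → Bool) : IsSolution f (glue x t₀ σ) := by
  intro t
  by_cases ht : ∃ k : ℤ, t = t₀ + k
  · obtain ⟨k, rfl⟩ := ht
    have hval : glue x t₀ σ (t₀ + k) = x (t₀ + k) := by simp [glue, hz k]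
    rw [hval]
    exact HasDerivAt.ite_of_eq (by simpa [hz k] using hy (t₀ + k)) (hx _) (hz k)
  · have hev : ∀ᶠ s in 𝓝 t, σ ⌊s - t₀⌋ = σ ⌊t - t₀⌋ :=
      (Continuous.prodMk_right σ).continuousAt.eventually (eventually_apply_floor_sub_eq ht)
    have hbranch : HasDerivAt (fun s => if σ ⌊t - t₀⌋ then x (s + 1) else x s)
        (f (t, glue x t₀ σ t)) t := by
      unfold glue
      split
      exacts [hy t, hx t]
    exact hbranch.congr_of_eventuallyEq (hev.mono fun s hs => by simp only [glue, hs])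

end Glue

lemma Function.Periodic.antiperiodic_comp_add_sub {x : ℝ → ℝ} {c : ℝ} (hx : Periodic x (2 * c)) :
    Antiperiodic (fun t => x (t + c) - x t) c := fun t => by
  simp only [add_assoc, ← two_mul, hx t]
  ring

lemma Function.Antiperiodic.exists_eq_zero {g : ℝ → ℝ} {c : ℝ} (hg : Antiperiodic g c)
    (hc : Continuous g) : ∃ t, g t = 0 := by
  have hgc : g c = -g 0 := by simpa using hg 0
  rcases le_total (g 0) 0 with h | h
  · exact intermediate_value_univ 0 c hc ⟨h, by linarith⟩
  · exact intermediate_value_univ c 0 hc ⟨by linarith, h⟩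

section Periodic

variable {x : ℝ → ℝ} (hx2 : Function.Periodic x 2)
include hx2

lemma antiperiodic_comp_add_one_sub : Function.Antiperiodic (fun t => x (t + 1) - x t) 1 :=
  Function.Periodic.antiperiodic_comp_add_sub (by rwa [mul_one])

lemma add_int_add_one_eq_iff (t : ℝ) (k : ℤ) : x (t + k + 1) = x (t + k) ↔ x (t + 1) = x t := by
  have := (antiperiodic_comp_add_one_sub hx2).add_int_mul_eq (x := t) k
  rw [mul_one] at this
  rw [← sub_eq_zero, this, ← sub_eq_zero (a := x (t + 1))]
  simp

lemma exists_mem_Ico_forall_int_add_one_eq (hx : Continuous x) :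
    ∃ t₀ ∈ Ico (0 : ℝ) 1, ∀ k : ℤ, x (t₀ + k + 1) = x (t₀ + k) := by
  obtain ⟨t, ht⟩ := (antiperiodic_comp_add_one_sub hx2).exists_eq_zero (by fun_prop)
  refine ⟨Int.fract t, ⟨Int.fract_nonneg t, Int.fract_lt_one t⟩, fun k => ?_⟩
  rw [Int.fract, show t - ⌊t⌋ + k = t + ((k - ⌊t⌋ : ℤ) : ℝ) by push_cast; ring,
    add_int_add_one_eq_iff hx2]
  exact sub_eq_zero.1 ht

lemma exists_floor_sub_eq_zero_forall_add_one_ne (t₀ : ℝ) {t₁ : ℝ} (ht₁ : x (t₁ + 1) ≠ x t₁) :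
    ∃ t₂, ⌊t₂ - t₀⌋ = 0 ∧ ∀ k : ℤ, x (t₂ + k + 1) ≠ x (t₂ + k) := by
  refine ⟨t₁ - ⌊t₁ - t₀⌋, by rw [sub_right_comm, ← Int.fract, Int.floor_fract], fun k => ?_⟩
  rwa [show t₁ - ⌊t₁ - t₀⌋ + k = t₁ + ((k - ⌊t₁ - t₀⌋ : ℤ) : ℝ) by push_cast; ring,
    Ne, add_int_add_one_eq_iff hx2]

end Periodic

section GlueMap

variable {x : ℝ → ℝ} {t₀ : ℝ} (hx : Continuous x) (hz : ∀ k : ℤ, x (t₀ + k + 1) = x (t₀ + k))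

noncomputable def glueMap : C(ℤ → Bool, C(ℝ, ℝ)) :=
  ContinuousMap.curry ⟨fun p => glue x t₀ p.1 p.2, continuous_glue hz hx⟩

lemma glueMap_apply (σ : ℤ → Bool) (t : ℝ) : glueMap hx hz σ t = glue x t₀ σ t := rfl

lemma semiconj_glueMap_flipShift (hx2 : Function.Periodic x 2) :
    Function.Semiconj (glueMap hx hz) flipShift shiftOne :=
  fun σ => ContinuousMap.ext fun t => (glue_add_one hx2 σ t).symm

lemma glueMap_injective {t₂ : ℝ} (ht₂ : ⌊t₂ - t₀⌋ = 0)
    (hd : ∀ k : ℤ, x (t₂ + k + 1) ≠ x (t₂ + k)) : Function.Injective (glueMap hx hz) := by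
  intro σ τ h
  funext k
  have hfloor : ⌊t₂ + k - t₀⌋ = k := by
    rw [add_sub_right_comm, Int.floor_add_intCast, ht₂, zero_add]
  have := congrArg (· (t₂ + k)) h
  simp only [glueMap_apply, glue, hfloor] at this
  rcases hσ : σ k <;> rcases hτ : τ k <;> simp only [hσ, hτ] at this
  · rfl
  · exact absurd this.symm (hd k)
  · exact absurd this (hd k)
  · rfl

lemma rho_glueMap_le (ht₀ : t₀ ∈ Ico 0 1) (M : ℕ) {σ τ : ℤ → Bool}
    (h : ∀ k : ℤ, |k| ≤ M + 1 → σ k = τ k) :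
    rho (glueMap hx hz σ) (glueMap hx hz τ) ≤ (1 / 2) ^ M := by
  refine rho_le_of_eqOn _ _ M fun t ht => ?_
  have hk : |⌊t - t₀⌋| ≤ M + 1 := by
    refine abs_le.2 ⟨Int.le_floor.2 ?_, Int.floor_le_iff.2 ?_⟩ <;> push_cast <;>
      linarith [ht.1, ht.2, ht₀.1, ht₀.2]
  simp only [glueMap_apply, glue, h _ hk]

lemma le_rho_glueMap (ht₀ : t₀ ∈ Ico 0 1) {t₂ : ℝ} (ht₂ : ⌊t₂ - t₀⌋ = 0) {σ τ : ℤ → Bool}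
    (h : σ 0 ≠ τ 0) :
    |x (t₂ + 1) - x t₂| / (1 + |x (t₂ + 1) - x t₂|) / 2 ^ 2 ≤
      rho (glueMap hx hz σ) (glueMap hx hz τ) := by
  obtain ⟨h₁, h₂⟩ := Int.floor_eq_zero_iff.1 ht₂
  have hmem : t₂ ∈ Icc (-((1 + 1 : ℕ) : ℝ)) (1 + 1 : ℕ) := by
    constructor <;> push_cast <;> linarith [ht₀.1, ht₀.2]
  convert abs_sub_div_le_rho 1 _ _ hmem using 3 <;>
  · simp only [glueMap_apply, glue, ht₂]
    rcases hσ : σ 0 <;> rcases hτ : τ 0 <;> simp_all [abs_sub_comm]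

end GlueMap

lemma Function.Injective.not_countable_range {α β : Type*} [Uncountable α] {f : α → β}
    (hf : Function.Injective f) : ¬(range f).Countable := fun h =>
  not_countable (α := α) <| countable_univ_iff.1 <|
    countable_of_injective_of_countable_image hf.injOn (by rwa [image_univ])

instance : Uncountable (ℕ → Bool) := by
  rw [← Cardinal.aleph0_lt_mk_iff]
  simpa using Cardinal.aleph0_lt_continuum

lemma blockCode_injective : Function.Injective blockCode := fun u v h =>
  funext fun i => by
    obtain ⟨n, hn⟩ := (frequently_blockCode_eq_apply i).exists
    rw [← hn u, ← hn v, h]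

section Scrambled

variable {x : ℝ → ℝ} {t₀ : ℝ} (hx : Continuous x) (hz : ∀ k : ℤ, x (t₀ + k + 1) = x (t₀ + k))
  (ht₀ : t₀ ∈ Ico 0 1)
include ht₀

lemma liminf_rho_glueMap_iterate_blockCode (u v : ℕ → Bool) :
    atTop.liminf (fun n => rho (glueMap hx hz (flipShift^[n] (blockCode u)))
      (glueMap hx hz (flipShift^[n] (blockCode v)))) = 0 := by
  refine liminf_eq_zero_of_frequently_le (fun n => rho_nonneg _ _) fun ε hε => ?_
  obtain ⟨M, hM⟩ := exists_pow_lt_of_lt_one hε (by norm_num : (1 / 2 : ℝ) < 1)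
  refine (frequently_blockCode_eq_false (M + 1)).mono fun n hn =>
    (rho_glueMap_le hx hz ht₀ M fun k hk => ?_).trans hM.le
  rw [flipShift_iterate_apply_eq_iff, hn u k (mod_cast hk), hn v k (mod_cast hk)]

lemma limsup_rho_glueMap_iterate_blockCode_pos {t₂ : ℝ} (ht₂ : ⌊t₂ - t₀⌋ = 0)
    (hd : x (t₂ + 1) ≠ x t₂) {u v : ℕ → Bool} (huv : u ≠ v) :
    0 < atTop.limsup (fun n => rho (glueMap hx hz (flipShift^[n] (blockCode u)))
      (glueMap hx hz (flipShift^[n] (blockCode v)))) := by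
  obtain ⟨i, hi⟩ := Function.ne_iff.1 huv
  have hpos : 0 < |x (t₂ + 1) - x t₂| := abs_pos.2 (sub_ne_zero.2 hd)
  refine (by positivity : 0 < |x (t₂ + 1) - x t₂| / (1 + |x (t₂ + 1) - x t₂|) / 2 ^ 2).trans_le
    (le_limsup_of_frequently_le ((frequently_blockCode_eq_apply i).mono fun n hn =>
      le_rho_glueMap hx hz ht₀ ht₂ ?_) (isBoundedUnder_of ⟨1, fun n => rho_le_one _ _⟩))
  rwa [Ne, flipShift_iterate_apply_eq_iff, zero_add, hn u, hn v]

end Scrambled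

theorem li_yorke_chaos_general
    (f : ℝ × ℝ → ℝ)
    (hper : ∀ t x : ℝ, f (t + 1, x) = f (t, x))
    (x : ℝ → ℝ) (hx : IsSolution f x)
    (hx2 : ∀ t : ℝ, x (t + 2) = x t)
    (t₁ : ℝ) (ht₁ : x (t₁ + 1) ≠ x t₁) :
    ∃ W : Set C(ℝ, ℝ), IsCompact W ∧
      (∀ w ∈ W, IsSolution f w) ∧
      shiftOne '' W = W ∧
      ∃ S ⊆ W, ¬ S.Countable ∧
        ∀ w ∈ S, ∀ v ∈ S, w ≠ v →
          Filter.atTop.liminf (fun n : ℕ => rho (shiftOne^[n] w) (shiftOne^[n] v)) = 0 ∧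
          0 < Filter.atTop.limsup (fun n : ℕ => rho (shiftOne^[n] w) (shiftOne^[n] v)) := by
  obtain ⟨t₀, ht₀, hz⟩ := exists_mem_Ico_forall_int_add_one_eq hx2 hx.continuous
  obtain ⟨t₂, ht₂, hd⟩ := exists_floor_sub_eq_zero_forall_add_one_ne hx2 t₀ ht₁
  set Φ := glueMap hx.continuous hz
  have hΦ : Function.Semiconj Φ flipShift shiftOne := semiconj_glueMap_flipShift _ hz hx2
  have hiter (n : ℕ) (σ : ℤ → Bool) : shiftOne^[n] (Φ σ) = Φ (flipShift^[n] σ) :=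
    (hΦ.iterate_right n σ).symm
  have hΦinj : Function.Injective (Φ ∘ blockCode) :=
    (glueMap_injective hx.continuous hz ht₂ hd).comp blockCode_injective
  refine ⟨range Φ, isCompact_range Φ.continuous,
    forall_mem_range.2 (isSolution_glue hz hx (hx.comp_add_one hper)), ?_,
    range (Φ ∘ blockCode), range_comp_subset_range _ _, hΦinj.not_countable_range, ?_⟩
  · rw [← range_comp, ← hΦ.comp_eq, flipShift_surjective.range_comp]
  · rintro _ ⟨u, rfl⟩ _ ⟨v, rfl⟩ huv
    simp only [Function.comp_apply, hiter]
    exact ⟨liminf_rho_glueMap_iterate_blockCode hx.continuous hz ht₀ u v,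
      limsup_rho_glueMap_iterate_blockCode_pos hx.continuous hz ht₀ ht₂ (by simpa using hd 0)
        (ne_of_apply_ne _ huv)⟩

theorem li_yorke_chaos
    (f : ℝ × ℝ → ℝ) (hf : Continuous f)
    (hper : ∀ t x : ℝ, f (t + 1, x) = f (t, x))
    (x : ℝ → ℝ) (hx : IsSolution f x)
    (hx2 : ∀ t : ℝ, x (t + 2) = x t)
    (t₁ : ℝ) (ht₁ : x (t₁ + 1) ≠ x t₁) :
    ∃ W : Set C(ℝ, ℝ), IsCompact W ∧
      (∀ w ∈ W, IsSolution f w) ∧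
      shiftOne '' W = W ∧
      ∃ S ⊆ W, ¬ S.Countable ∧
        ∀ w ∈ S, ∀ v ∈ S, w ≠ v →
          Filter.atTop.liminf (fun n : ℕ => rho (shiftOne^[n] w) (shiftOne^[n] v)) = 0 ∧
          0 < Filter.atTop.limsup (fun n : ℕ => rho (shiftOne^[n] w) (shiftOne^[n] v)) :=
  li_yorke_chaos_general f hper x hx hx2 t₁ ht₁
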